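/- Let M be a finite metric space, m ≤ #M, and 0 < λ ≤ (diam M)/2. Then 2·d_GH(λΔₘ, M) = max(dₘ(M), diam M - λ), where dₘ(M) = min over partitions D of M into m nonempty parts of diam D (the maximum diameter of a part). -/

import Mathlib

open scoped Classical

/-- The simplex `λΔₘ`: `m` points with all nonzero distances equal to `lam`. -/
noncomputable def simplexMetric (m : ℕ) (lam : ℝ) (hl : 0 < lam) : MetricSpace (Fin m) where
  dist x y := if x = y then 0 else lam
  dist_self x := if_pos rfl
  dist_comm x y := by
    by_cases h : x = y
    · simp [h]
    · simp [h, Ne.symm h]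
  dist_triangle x y z := by
    by_cases hxz : x = z <;> by_cases hxy : x = y <;> by_cases hyz : y = z <;>
      simp_all <;> linarith
  eq_of_dist_eq_zero := by
    intro x y h
    by_cases hxy : x = y
    · exact hxy
    · simp only [if_neg hxy] at h; exact absurd h hl.ne'

/-- `P` is a partition of `X` into `m` nonempty parts. -/
def IsPartition {X : Type*} {m : ℕ} (P : Fin m → Set X) : Prop :=
  (∀ i, (P i).Nonempty) ∧ (Pairwise fun i j => Disjoint (P i) (P j)) ∧
    (⋃ i, P i) = Set.univ

/-- `diam D`: the maximum of the diameters of the parts. -/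
noncomputable def diamD {X : Type*} [MetricSpace X] {m : ℕ} (P : Fin m → Set X) : ℝ :=
  ⨆ i, Metric.diam (P i)

/-- `α(D)`: the minimum over pairs of distinct parts of the infimum distance between them. -/
noncomputable def alphaD {X : Type*} [MetricSpace X] {m : ℕ} (P : Fin m → Set X) : ℝ :=
  sInf {r : ℝ | ∃ i j, i ≠ j ∧ ∃ x ∈ P i, ∃ y ∈ P j, r = dist x y}

/-- `β(D)`: the maximum over pairs of distinct parts of the supremum distance between them. -/
noncomputable def betaD {X : Type*} [MetricSpace X] {m : ℕ} (P : Fin m → Set X) : ℝ :=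
  sSup {r : ℝ | ∃ i j, i ≠ j ∧ ∃ x ∈ P i, ∃ y ∈ P j, r = dist x y}

/-!
A partition `D` of `M` into `m` parts gives a correspondence between `M` and `λΔₘ` (part `i` ↔
vertex `i`) of distortion `max (diam D) (diam M - λ)`; here `λ ≤ diam M / 2` is what makes
`λ - |xy| ≤ diam M - λ`. Conversely, an optimal coupling yields a map `φ : M → λΔₘ` with
`|xy| ≤ |φx φy| + 2 d_GH`. This gives `diam M ≤ λ + 2 d_GH`, and the fibres of `φ`, split further
until there are exactly `m` of them (possible as `m ≤ #M`), form a partition into parts of diameter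
at most `2 d_GH`.
-/

open Set Metric GromovHausdorff

section Refinement

variable {M α : Type*} [Fintype M] [Fintype α] [DecidableEq α]

theorem exists_refinement_card_image_lt (h : Fintype.card α ≤ Fintype.card M) {φ : M → α}
    (hφ : ¬ Function.Surjective φ) :
    ∃ ψ : M → α, (∀ x y, ψ x = ψ y → φ x = φ y) ∧
      (Finset.univ.image φ).card < (Finset.univ.image ψ).card := by
  obtain ⟨i, hi⟩ : ∃ i, i ∉ Finset.univ.image φ := by
    simpa [Function.Surjective] using hφ
  have hφ_not_inj : ¬ Function.Injective φ := fun hinj =>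
    hφ ((Fintype.bijective_iff_injective_and_card φ).2
      ⟨hinj, le_antisymm (Fintype.card_le_of_injective φ hinj) h⟩).2
  obtain ⟨x₀, y₀, hφxy, hxy⟩ := Function.not_injective_iff.mp hφ_not_inj
  refine ⟨Function.update φ x₀ i, fun x y hψ => ?_, ?_⟩
  · simp only [Function.update_apply] at hψ
    split_ifs at hψ <;> subst_vars <;> simp_all
  · refine Finset.card_lt_card ((Finset.ssubset_iff_of_subset ?_).2 ⟨i, ?_, hi⟩)
    · intro a ha
      obtain ⟨x, -, rfl⟩ := Finset.mem_image.mp ha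
      by_cases hx : x = x₀
      · subst hx
        exact Finset.mem_image.mpr ⟨y₀, Finset.mem_univ _, by simp [Ne.symm hxy, hφxy]⟩
      · exact Finset.mem_image.mpr ⟨x, Finset.mem_univ _, by simp [hx]⟩
    · exact Finset.mem_image.mpr ⟨x₀, Finset.mem_univ _, by simp⟩

theorem exists_surjective_refinement (h : Fintype.card α ≤ Fintype.card M) (φ : M → α) :
    ∃ f : M → α, Function.Surjective f ∧ ∀ x y, f x = f y → φ x = φ y := by
  by_cases hφ : Function.Surjective φ
  · exact ⟨φ, hφ, fun _ _ => id⟩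
  obtain ⟨ψ, hψφ, hlt⟩ := exists_refinement_card_image_lt h hφ
  obtain ⟨f, hf, hfψ⟩ := exists_surjective_refinement h ψ
  exact ⟨f, hf, fun x y hxy => hψφ x y (hfψ x y hxy)⟩
termination_by Fintype.card α - (Finset.univ.image φ).card
decreasing_by have := Finset.card_le_univ (Finset.univ.image ψ); omega

end Refinement

theorem isPartition_fibers {M : Type*} {m : ℕ} {f : M → Fin m} (hf : Function.Surjective f) :
    IsPartition fun i => f ⁻¹' {i} :=
  ⟨fun i => (hf i).imp fun _ hx => hx,
    fun _ _ hij => Set.disjoint_left.mpr fun _ hx hy => hij (hx.symm.trans hy),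
    Set.eq_univ_of_forall fun x => Set.mem_iUnion.mpr ⟨f x, rfl⟩⟩

section Partition

variable {M : Type*} [MetricSpace M] {m : ℕ}

theorem diam_le_diamD (P : Fin m → Set M) (i : Fin m) : diam (P i) ≤ diamD P :=
  le_ciSup (f := fun i => diam (P i)) (Set.finite_range _).bddAbove i

theorem finite_setOf_diamD [Finite M] :
    {r : ℝ | ∃ P : Fin m → Set M, IsPartition P ∧ r = diamD P}.Finite :=
  (Set.finite_range diamD).subset fun _ ⟨P, _, hr⟩ => ⟨P, hr.symm⟩

variable (M m) in
/-- The paper's `dₘ(M)`. -/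
noncomputable def minPartitionDiam : ℝ :=
  sInf {r : ℝ | ∃ P : Fin m → Set M, IsPartition P ∧ r = diamD P}

theorem minPartitionDiam_le_diamD [Finite M] {P : Fin m → Set M} (hP : IsPartition P) :
    minPartitionDiam M m ≤ diamD P :=
  csInf_le finite_setOf_diamD.bddBelow ⟨P, hP, rfl⟩

theorem exists_isPartition_diamD_eq_minPartitionDiam [Fintype M] [Nonempty (Fin m)]
    (hmM : m ≤ Fintype.card M) :
    ∃ P : Fin m → Set M, IsPartition P ∧ diamD P = minPartitionDiam M m := by
  obtain ⟨f, hf, -⟩ := exists_surjective_refinement (by simpa using hmM)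
    fun _ : M => Classical.arbitrary (Fin m)
  obtain ⟨P, hP, h⟩ : minPartitionDiam M m ∈ {r : ℝ | ∃ P, IsPartition P ∧ r = diamD P} :=
    Set.Nonempty.csInf_mem ⟨_, _, isPartition_fibers hf, rfl⟩ finite_setOf_diamD
  exact ⟨P, hP, h.symm⟩

end Partition

namespace GromovHausdorff

variable {X Y : Type*} [MetricSpace X] [CompactSpace X] [Nonempty X]
  [MetricSpace Y] [CompactSpace Y] [Nonempty Y]

theorem ghDist_comm : ghDist X Y = ghDist Y X :=
  dist_comm _ _

theorem exists_dist_le_dist_add_two_mul_ghDist :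
    ∃ φ : Y → X, ∀ y y', dist y y' ≤ dist (φ y) (φ y') + 2 * ghDist X Y := by
  set f := optimalGHInjl X Y
  set g := optimalGHInjr X Y
  have hfin : hausdorffEDist (range g) (range f) ≠ ⊤ :=
    hausdorffEDist_ne_top_of_nonempty_of_bounded (range_nonempty g) (range_nonempty f)
      (isCompact_range (isometry_optimalGHInjr X Y).continuous).isBounded
      (isCompact_range (isometry_optimalGHInjl X Y).continuous).isBounded
  have hclose : ∀ y, ∃ x, dist (g y) (f x) ≤ ghDist X Y := by
    intro y
    obtain ⟨_, ⟨x, rfl⟩, hx⟩ := (isCompact_range (isometry_optimalGHInjl X Y).continuous)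
      |>.exists_infDist_eq_dist (range_nonempty f) (g y)
    refine ⟨x, hx ▸ ?_⟩
    rw [← hausdorffDist_optimal, hausdorffDist_comm]
    exact infDist_le_hausdorffDist_of_mem (mem_range_self y) hfin
  choose φ hφ using hclose
  refine ⟨φ, fun y y' => ?_⟩
  calc dist y y' = dist (g y) (g y') := ((isometry_optimalGHInjr X Y).dist_eq y y').symm
    _ ≤ dist (g y) (f (φ y)) + dist (f (φ y)) (f (φ y')) + dist (f (φ y')) (g y') :=
      dist_triangle4 _ _ _ _
    _ ≤ ghDist X Y + dist (φ y) (φ y') + ghDist X Y := by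
      rw [(isometry_optimalGHInjl X Y).dist_eq, dist_comm (f _)]
      gcongr <;> apply hφ
    _ = dist (φ y) (φ y') + 2 * ghDist X Y := by ring

theorem diam_univ_le_add_two_mul_ghDist :
    diam (univ : Set Y) ≤ diam (univ : Set X) + 2 * ghDist X Y := by
  obtain ⟨φ, hφ⟩ := exists_dist_le_dist_add_two_mul_ghDist (X := X) (Y := Y)
  have hghDist : 0 ≤ ghDist X Y := dist_nonneg
  refine diam_le_of_forall_dist_le (by positivity) fun y _ y' _ => (hφ y y').trans ?_
  gcongr
  exact dist_le_diam_of_mem isCompact_univ.isBounded (mem_univ _) (mem_univ _)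

end GromovHausdorff

section Simplex

variable {M : Type*} [MetricSpace M] [Fintype M] [Nonempty M]
  {m : ℕ} [MetricSpace (Fin m)] [Nonempty (Fin m)]

theorem minPartitionDiam_le_two_mul_ghDist (hmM : m ≤ Fintype.card M) :
    minPartitionDiam M m ≤ 2 * ghDist (Fin m) M := by
  obtain ⟨φ, hφ⟩ := exists_dist_le_dist_add_two_mul_ghDist (X := Fin m) (Y := M)
  obtain ⟨f, hf, hfφ⟩ := exists_surjective_refinement (by simpa using hmM) φ
  have hghDist : 0 ≤ ghDist (Fin m) M := dist_nonneg
  refine (minPartitionDiam_le_diamD (isPartition_fibers hf)).trans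
    (Real.iSup_le (fun i => diam_le_of_forall_dist_le (by positivity) fun x hx y hy => ?_)
      (by positivity))
  simpa [hfφ x y (hx.trans hy.symm)] using hφ x y

theorem two_mul_ghDist_le_max {lam : ℝ} (hdist : ∀ i j : Fin m, i ≠ j → dist i j = lam)
    (hl2 : lam ≤ diam (univ : Set M) / 2) {P : Fin m → Set M} (hP : IsPartition P) :
    2 * ghDist (Fin m) M ≤ max (diamD P) (diam (univ : Set M) - lam) := by
  obtain ⟨hne, hdisj, hcover⟩ := hP
  choose p hp using fun x : M => Set.mem_iUnion.mp (hcover.symm ▸ mem_univ x)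
  have hp_unique : ∀ x i, x ∈ P i → p x = i := fun x i hx =>
    by_contra fun h => Set.disjoint_left.mp (hdisj h) (hp x) hx
  suffices ghDist M (Fin m) ≤ 0 + max (diamD P) (diam (univ : Set M) - lam) / 2 + 0 by
    rw [ghDist_comm]; linarith
  refine ghDist_le_of_approx_subsets (s := univ) (fun x => p x)
    (fun x => ⟨x, mem_univ x, by simp⟩) (fun i => ?_) fun x y => ?_
  · obtain ⟨x, hx⟩ := hne i
    exact ⟨⟨x, mem_univ x⟩, by simp [hp_unique x i hx]⟩
  have hxy : dist x.1 y.1 ≤ diam (univ : Set M) :=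
    dist_le_diam_of_mem isCompact_univ.isBounded (mem_univ _) (mem_univ _)
  rw [Subtype.dist_eq]
  by_cases hpxy : p x = p y
  · rw [hpxy, dist_self, sub_zero, abs_of_nonneg dist_nonneg]
    exact le_max_of_le_left ((dist_le_diam_of_mem (P _).toFinite.isBounded
      (hp x) (hpxy ▸ hp y)).trans (diam_le_diamD P _))
  · rw [hdist _ _ hpxy]
    have : 0 ≤ dist x.1 y.1 := dist_nonneg
    exact le_max_of_le_right (abs_sub_le_iff.mpr ⟨by linarith, by linarith⟩)

end Simplex

theorem stmt_12 {M : Type*} [MetricSpace M] [Fintype M] [Nonempty M]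
    {m : ℕ} (hm : 2 ≤ m) (hmM : m ≤ Fintype.card M)
    {lam : ℝ} (hl : 0 < lam) (hl2 : lam ≤ Metric.diam (Set.univ : Set M) / 2)
    (dm : ℝ)
    (hdm : dm = sInf {r : ℝ | ∃ P : Fin m → Set M, IsPartition P ∧ r = diamD P}) :
    2 * (letI := simplexMetric m lam hl
         haveI : Nonempty (Fin m) := Fin.pos_iff_nonempty.mp (by omega)
         GromovHausdorff.ghDist (Fin m) M) =
      max dm (Metric.diam (Set.univ : Set M) - lam) := by
  let := simplexMetric m lam hl
  have : Nonempty (Fin m) := Fin.pos_iff_nonempty.mp (by omega)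
  have hdist : ∀ i j : Fin m, i ≠ j → dist i j = lam := fun i j hij => if_neg hij
  have hdiam : diam (univ : Set (Fin m)) ≤ lam :=
    diam_le_of_forall_dist_le hl.le fun i _ j _ => by
      by_cases hij : i = j
      · simp [hij, hl.le]
      · exact (hdist i j hij).le
  rw [show dm = minPartitionDiam M m from hdm]
  obtain ⟨P, hP, hPdm⟩ := exists_isPartition_diamD_eq_minPartitionDiam (M := M) hmM
  refine le_antisymm (hPdm ▸ two_mul_ghDist_le_max hdist hl2 hP)
    (max_le (minPartitionDiam_le_two_mul_ghDist hmM) ?_)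
  linarith [diam_univ_le_add_two_mul_ghDist (X := Fin m) (Y := M)]
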